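/- If Φ : G → 𝒜 is a letter-quasimorphism, then the associated map Φ̃ : G → 𝒜, defined by Φ̃(g) := (Φ(g))~, is a well-behaved letter-quasimorphism. -/

import Mathlib

open FreeGroup

abbrev W : Type := FreeGroup (Fin 2)

/-- The set of alternating words: reduced words whose letters alternate
between the two generators `a` (index 0) and `b` (index 1). -/
def Alt : Set W := {w | List.Chain' (fun p q : Fin 2 × Bool => p.1 ≠ q.1) w.toWord}

/-- A letter-quasimorphism `Φ : G → 𝒜`. -/
def IsLetterQM {G : Type*} [Group G] (Φ : G → W) : Prop :=
  (∀ g, Φ g ∈ Alt) ∧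
  (∀ g : G, Φ g⁻¹ = (Φ g)⁻¹) ∧
  (∀ g h : G,
    Φ g * Φ h * (Φ (g * h))⁻¹ = 1 ∨
    ∃ (i : Fin 2) (s₁ s₂ s₃ : Bool) (c₁ c₂ c₃ : W),
      c₁ ∈ Alt ∧ c₂ ∈ Alt ∧ c₃ ∈ Alt ∧
      ¬(s₁ = s₂ ∧ s₂ = s₃) ∧
      (Φ g).toWord = (c₁⁻¹).toWord ++ [(i, s₁)] ++ c₂.toWord ∧
      (Φ h).toWord = (c₂⁻¹).toWord ++ [(i, s₂)] ++ c₃.toWord ∧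
      ((Φ (g * h))⁻¹).toWord = (c₃⁻¹).toWord ++ [(i, s₃)] ++ c₁.toWord)

/-- The automorphism `φ_a : a ↦ a⁻¹, b ↦ b` of `F₂`. -/
def phiaF : W →* W :=
  FreeGroup.lift (fun i : Fin 2 => if i = 0 then (FreeGroup.of (0 : Fin 2))⁻¹ else FreeGroup.of 1)

/-- The automorphism `φ_b : a ↦ a, b ↦ b⁻¹` of `F₂`. -/
def phibF : W →* W :=
  FreeGroup.lift (fun i : Fin 2 => if i = 0 then FreeGroup.of 0 else (FreeGroup.of (1 : Fin 2))⁻¹)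

/-- Generating moves for the equivalence relation `∼` on triples:
rotation, inversion, and the sign-change automorphisms `φ_a`, `φ_b`. -/
def TripleBase : W × W × W → W × W × W → Prop := fun t t' =>
  t' = (t.2.1, t.2.2, t.1) ∨
  t' = ((t.2.2)⁻¹, (t.2.1)⁻¹, (t.1)⁻¹) ∨
  t' = (phiaF t.1, phiaF t.2.1, phiaF t.2.2) ∨
  t' = (phibF t.1, phibF t.2.1, phibF t.2.2)

/-- The equivalence relation `∼` on triples of elements of `F₂`. -/
def TripleEquiv : W × W × W → W × W × W → Prop := Relation.EqvGen TripleBase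

/-- Form [T1a]: `(c₁⁻¹ a b c₂, c₂⁻¹ b⁻¹ a c₃, c₃⁻¹ a⁻¹ c₁)`, all words reduced. -/
def FormT1a (y₁ y₂ y₃ : W) : Prop :=
  ∃ c₁ c₂ c₃ : W, c₁ ∈ Alt ∧ c₂ ∈ Alt ∧ c₃ ∈ Alt ∧
    y₁.toWord = (c₁⁻¹).toWord ++ [((0 : Fin 2), true), ((1 : Fin 2), true)] ++ c₂.toWord ∧
    y₂.toWord = (c₂⁻¹).toWord ++ [((1 : Fin 2), false), ((0 : Fin 2), true)] ++ c₃.toWord ∧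
    y₃.toWord = (c₃⁻¹).toWord ++ [((0 : Fin 2), false)] ++ c₁.toWord

/-- Form [T1b]: `(c₁⁻¹ b a c₂, c₂⁻¹ a⁻¹ b c₃, c₃⁻¹ b⁻¹ c₁)`, all words reduced. -/
def FormT1b (y₁ y₂ y₃ : W) : Prop :=
  ∃ c₁ c₂ c₃ : W, c₁ ∈ Alt ∧ c₂ ∈ Alt ∧ c₃ ∈ Alt ∧
    y₁.toWord = (c₁⁻¹).toWord ++ [((1 : Fin 2), true), ((0 : Fin 2), true)] ++ c₂.toWord ∧
    y₂.toWord = (c₂⁻¹).toWord ++ [((0 : Fin 2), false), ((1 : Fin 2), true)] ++ c₃.toWord ∧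
    y₃.toWord = (c₃⁻¹).toWord ++ [((1 : Fin 2), false)] ++ c₁.toWord

/-- Form [T2a]: `(c₁⁻¹ b⁻¹ a b c₂, c₂⁻¹ b⁻¹, b c₁)`, all words reduced. -/
def FormT2a (y₁ y₂ y₃ : W) : Prop :=
  ∃ c₁ c₂ : W, c₁ ∈ Alt ∧ c₂ ∈ Alt ∧
    y₁.toWord = (c₁⁻¹).toWord ++
      [((1 : Fin 2), false), ((0 : Fin 2), true), ((1 : Fin 2), true)] ++ c₂.toWord ∧
    y₂.toWord = (c₂⁻¹).toWord ++ [((1 : Fin 2), false)] ∧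
    y₃.toWord = [((1 : Fin 2), true)] ++ c₁.toWord

/-- Form [T2b]: `(c₁⁻¹ a⁻¹ b a c₂, c₂⁻¹ a⁻¹, a c₁)`, all words reduced. -/
def FormT2b (y₁ y₂ y₃ : W) : Prop :=
  ∃ c₁ c₂ : W, c₁ ∈ Alt ∧ c₂ ∈ Alt ∧
    y₁.toWord = (c₁⁻¹).toWord ++
      [((0 : Fin 2), false), ((1 : Fin 2), true), ((0 : Fin 2), true)] ++ c₂.toWord ∧
    y₂.toWord = (c₂⁻¹).toWord ++ [((0 : Fin 2), false)] ∧
    y₃.toWord = [((0 : Fin 2), true)] ++ c₁.toWord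

/-- A triple of alternating words is letter-thin if it is `∼`-equivalent to a triple
of one of the forms [T1a], [T1b], [T2a], [T2b]. -/
def LetterThin (x₁ x₂ x₃ : W) : Prop :=
  x₁ ∈ Alt ∧ x₂ ∈ Alt ∧ x₃ ∈ Alt ∧
  ∃ y₁ y₂ y₃ : W, TripleEquiv (x₁, x₂, x₃) (y₁, y₂, y₃) ∧
    (FormT1a y₁ y₂ y₃ ∨ FormT1b y₁ y₂ y₃ ∨ FormT2a y₁ y₂ y₃ ∨ FormT2b y₁ y₂ y₃)

/-- A degenerate triple: one `∼`-equivalent to `(w, w⁻¹, e)`. -/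
def Degenerate (x₁ x₂ x₃ : W) : Prop :=
  ∃ u : W, TripleEquiv (x₁, x₂, x₃) (u, u⁻¹, 1)

/-- A well-behaved letter-quasimorphism `Ψ : G → 𝒜`: alternating, and every triple
`(Ψ(g), Ψ(h), Ψ(gh)⁻¹)` is letter-thin or degenerate. -/
def IsWellBehavedLQM {G : Type*} [Group G] (Ψ : G → W) : Prop :=
  (∀ g, Ψ g ∈ Alt) ∧
  (∀ g : G, Ψ g⁻¹ = (Ψ g)⁻¹) ∧
  (∀ g h : G,
    LetterThin (Ψ g) (Ψ h) ((Ψ (g * h))⁻¹) ∨ Degenerate (Ψ g) (Ψ h) ((Ψ (g * h))⁻¹))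

/-- `ζ_s`: the word prepended to `w` in the definition of `w̃`, depending on the
first letter of `w`. -/
def zetaS (p : Fin 2 × Bool) : W :=
  if p.1 = 0 then (if p.2 then 1 else FreeGroup.of 0 * FreeGroup.of 0)
  else FreeGroup.of 0

/-- `ζ_e`: the word appended to `w` in the definition of `w̃`, depending on the
last letter of `w`. -/
def zetaE (p : Fin 2 × Bool) : W :=
  if p.1 = 0 then (if p.2 then ((FreeGroup.of (0 : Fin 2)) * FreeGroup.of 0)⁻¹ else 1)
  else (FreeGroup.of (0 : Fin 2))⁻¹

/-- The map `w ↦ w̃`: `w̃ = e` for `w ∈ {a, e, a⁻¹}`, and otherwise `w̃` is the reduced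
form of `ζ_s(z_s)·w·ζ_e(z_e)` where `z_s`, `z_e` are the first and last letters of `w`. -/
def tildeW (w : W) : W :=
  match w.toWord with
  | [] => 1
  | [p] => if p.1 = (0 : Fin 2) then 1 else zetaS p * w * zetaE p
  | p :: q :: rest => zetaS p * w * zetaE ((q :: rest).getLast (List.cons_ne_nil q rest))

/-!
For an alternating word `w ∉ {e, a, a⁻¹}`, `w̃` arises from `w` by turning a boundary `a`-letter
into `a` at the start and into `a⁻¹` at the end, and by adding such a letter next to a boundary
`b`-letter. Hence `~` commutes with inversion and ignores boundary `a`-letters.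

If `Φ(g)Φ(h)Φ(gh)⁻¹ = e`, the three words form a tripod, and alternation forces one of its legs to
be empty (its three junctions would need three different generators). If a second leg is empty the
triple is `(w, w⁻¹, e)` up to rotation. Otherwise the junction of the other two legs contains an
`a`-letter, and adding a virtual boundary `a`-letter to one word turns the triple into a letter
triangle `(c₁⁻¹x₁c₂, c₂⁻¹x₂c₃, c₃⁻¹x₃c₁)` without changing the tildes.

On a letter triangle, `~` keeps the letters `xₖ` and changes each side `c` only at its far end, once
the empty sides are normalised; two empty sides give a degenerate triple. After rotating and
inverting, the signs of the letters are `(+, +, −)`; then the side `c₂` between the two positive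
letters starts with a letter `y` of the other generator, and the triple has the form [T1a] or
[T1b], after applying `φ_a` or `φ_b` if `y` is inverted.
-/

open List

theorem FreeGroup.IsReduced.exists_tripod {α : Type*} {L M : List (α × Bool)} (hL : IsReduced L)
    (hM : IsReduced M) : ∃ A B C, L = A ++ invRev B ∧ M = B ++ C ∧ IsReduced (A ++ C) := by
  classical
  induction M generalizing L with
  | nil => exact ⟨L, [], [], by simp [invRev], rfl, by simpa using hL⟩
  | cons y M ih =>
    rcases eq_nil_or_concat' L with rfl | ⟨L, x, rfl⟩
    · exact ⟨[], [], y :: M, rfl, rfl, hM⟩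
    by_cases hxy : x = (y.1, !y.2)
    · obtain ⟨A, B, C, rfl, rfl, hAC⟩ :=
        ih (hL.infix (prefix_append L [x]).isInfix) (hM.infix (suffix_cons y M).isInfix)
      refine ⟨A, y :: B, C, ?_, rfl, hAC⟩
      rw [FreeGroup.invRev_cons, hxy]; simp [invRev]
    · refine ⟨L ++ [x], [], y :: M, by simp [invRev], rfl, ?_⟩
      refine isChain_append.mpr ⟨hL, hM, fun a ha b hb => ?_⟩
      simp only [getLast?_concat, Option.mem_def, Option.some.injEq, head?_cons] at ha hb
      subst ha hb
      intro h1
      by_contra h2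
      exact hxy (Prod.ext h1 (by simpa [Bool.eq_not] using h2))

namespace LetterQM

/-- `(0, s)` is `a` or `a⁻¹` and `(1, s)` is `b` or `b⁻¹`, the positive power for `s = true`. -/
abbrev Letter : Type := Fin 2 × Bool

def IsAltWord (L : List Letter) : Prop := L.IsChain fun p q => p.1 ≠ q.1

theorem mem_Alt_iff {w : W} : w ∈ Alt ↔ IsAltWord w.toWord := Iff.rfl

theorem isAltWord_append {M N : List Letter} : IsAltWord (M ++ N) ↔
    IsAltWord M ∧ IsAltWord N ∧ ∀ x ∈ M.getLast?, ∀ y ∈ N.head?, x.1 ≠ y.1 :=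
  List.isChain_append

theorem isAltWord_iff_map_fst {L : List Letter} : IsAltWord L ↔ (L.map Prod.fst).IsChain (· ≠ ·) :=
  (isChain_map Prod.fst).symm

theorem IsAltWord.invRev {L : List Letter} (h : IsAltWord L) : IsAltWord (invRev L) := by
  unfold IsAltWord FreeGroup.invRev
  rw [List.isChain_reverse, List.isChain_map]
  exact h.imp fun _ _ hab e => hab e.symm

theorem IsAltWord.isReduced {L : List Letter} (h : IsAltWord L) : IsReduced L :=
  h.imp fun _ _ hab e => absurd e hab

theorem IsAltWord.toWord_mk {L : List Letter} (h : IsAltWord L) : (mk L).toWord = L := by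
  rw [FreeGroup.toWord_mk, h.isReduced.reduce_eq]

theorem IsAltWord.toWord_mk_inv {L : List Letter} (h : IsAltWord L) :
    ((mk L)⁻¹).toWord = FreeGroup.invRev L := by
  rw [FreeGroup.toWord_inv, h.toWord_mk]

theorem IsAltWord.mk_mem_Alt {L : List Letter} (h : IsAltWord L) : mk L ∈ Alt := by
  rw [mem_Alt_iff, h.toWord_mk]; exact h

theorem inv_mem_Alt {w : W} (h : w ∈ Alt) : w⁻¹ ∈ Alt := by
  rw [mem_Alt_iff, FreeGroup.toWord_inv]; exact IsAltWord.invRev h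

theorem IsAltWord.cons_a {L : List Letter} (h : IsAltWord L) (hL : ∀ y ∈ L.head?, y.1 ≠ 0)
    (s : Bool) : IsAltWord ((0, s) :: L) :=
  isChain_cons.mpr ⟨fun y hy => (hL y hy).symm, h⟩

theorem IsAltWord.append_a {L : List Letter} (h : IsAltWord L) (hL : ∀ y ∈ L.getLast?, y.1 ≠ 0)
    (s : Bool) : IsAltWord (L ++ [(0, s)]) :=
  isAltWord_append.mpr ⟨h, isChain_singleton _, fun y hy z hz => by
    simp only [head?_cons, Option.mem_def, Option.some.injEq] at hz; exact hz ▸ hL y hy⟩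

theorem invRev_singleton (x : Letter) : invRev [x] = [(x.1, !x.2)] := rfl

def startA : List Letter → List Letter
  | [] => []
  | p :: L => (0, true) :: if p.1 = 0 then L else p :: L

def endAInv (L : List Letter) : List Letter := invRev (startA (invRev L))

theorem startA_append {M : List Letter} (N : List Letter) (hM : M ≠ []) :
    startA (M ++ N) = startA M ++ N := by
  cases M with
  | nil => exact absurd rfl hM
  | cons p M => simp only [cons_append, startA]; split <;> simp

theorem endAInv_append (M : List Letter) {N : List Letter} (hN : N ≠ []) :
    endAInv (M ++ N) = M ++ endAInv N := by
  have : invRev N ≠ [] := by simpa [FreeGroup.invRev] using hN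
  simp [endAInv, FreeGroup.invRev_append, startA_append _ this, FreeGroup.invRev_invRev]

theorem endAInv_cons (x : Letter) {N : List Letter} (hN : N ≠ []) :
    endAInv (x :: N) = x :: endAInv N :=
  endAInv_append [x] hN

theorem startA_invRev (L : List Letter) : startA (invRev L) = invRev (endAInv L) := by
  simp [endAInv, FreeGroup.invRev_invRev]

theorem endAInv_invRev (L : List Letter) : endAInv (invRev L) = invRev (startA L) := by
  simp [endAInv, FreeGroup.invRev_invRev]

theorem startA_eq_nil_iff {L : List Letter} : startA L = [] ↔ L = [] := by
  cases L <;> simp [startA]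

theorem endAInv_eq_nil_iff {L : List Letter} : endAInv L = [] ↔ L = [] := by
  simp [endAInv, startA_eq_nil_iff, FreeGroup.invRev]

theorem endAInv_singleton (x : Letter) :
    endAInv [x] = if x.1 = 0 then [(0, false)] else [x, (0, false)] := by
  revert x; decide

theorem IsAltWord.startA {L : List Letter} (h : IsAltWord L) : IsAltWord (startA L) := by
  cases L with
  | nil => exact h
  | cons p L =>
    simp only [LetterQM.startA]
    split_ifs with hp
    · exact List.isChain_cons.mpr ⟨fun y hy => hp ▸ List.isChain_cons.mp h |>.1 y hy, h.tail⟩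
    · exact List.isChain_cons.mpr ⟨by simp; omega, h⟩

theorem IsAltWord.endAInv {L : List Letter} (h : IsAltWord L) : IsAltWord (endAInv L) :=
  h.invRev.startA.invRev

theorem startA_endAInv_comm {L : List Letter} (h : ∀ s, L ≠ [(0, s)]) :
    startA (endAInv L) = endAInv (startA L) := by
  rcases L with _ | ⟨p, _ | ⟨q, T⟩⟩
  · rfl
  · have hp : p.1 ≠ 0 := fun hp => h p.2 (by rw [← hp])
    simp [endAInv_singleton, hp, startA, endAInv_cons _ (cons_ne_nil _ _)]
  · rw [endAInv_cons _ (cons_ne_nil _ _)]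
    simp only [LetterQM.startA]
    split_ifs <;> simp [endAInv_cons _ (cons_ne_nil _ _)]

theorem zetaS_mul_mk (p : Letter) (T : List Letter) :
    zetaS p * mk (p :: T) = mk (startA (p :: T)) := by
  have key : ∀ p : Letter, zetaS p * mk [p] = mk (startA [p]) := by decide
  rw [← singleton_append, ← FreeGroup.mul_mk, ← mul_assoc, key, FreeGroup.mul_mk,
    ← startA_append _ (cons_ne_nil _ _), singleton_append]

theorem mk_mul_zetaE (T : List Letter) (z : Letter) :
    mk (T ++ [z]) * zetaE z = mk (endAInv (T ++ [z])) := by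
  have key : ∀ z : Letter, mk [z] * zetaE z = mk (endAInv [z]) := by decide
  rw [← FreeGroup.mul_mk, mul_assoc, key, FreeGroup.mul_mk, endAInv_append _ (cons_ne_nil _ _)]

theorem tildeW_of_toWord {w : W} {L : List Letter} (hw : w.toWord = L) (h₀ : L ≠ [])
    (h₁ : ∀ s, L ≠ [(0, s)]) : tildeW w = mk (startA (endAInv L)) := by
  have hwL : w = mk L := by rw [← hw, FreeGroup.mk_toWord]
  unfold tildeW
  rcases L with _ | ⟨p, _ | ⟨q, T⟩⟩
  · exact absurd rfl h₀
  · have hp : p.1 ≠ 0 := fun hp => h₁ p.2 (by rw [← hp])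
    have hend : endAInv [p] = [p, (0, false)] := by simp [endAInv_singleton, hp]
    rw [hw]
    dsimp only
    rw [if_neg hp, hwL, mul_assoc, ← nil_append [p], mk_mul_zetaE, nil_append, hend, zetaS_mul_mk]
  · simp only [hw]
    have hsplit := dropLast_append_getLast (cons_ne_nil q T)
    set z := (q :: T).getLast (cons_ne_nil q T)
    rw [hwL, ← hsplit, ← cons_append, mul_assoc, mk_mul_zetaE, cons_append,
      endAInv_cons _ (by simp), zetaS_mul_mk, ← endAInv_cons _ (by simp)]

theorem tildeW_one : tildeW 1 = 1 := by
  simp [tildeW]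

theorem tildeW_of_toWord_eq_a {w : W} {s : Bool} (hw : w.toWord = [(0, s)]) : tildeW w = 1 := by
  simp [tildeW, hw]

theorem tildeW_inv (w : W) : tildeW w⁻¹ = (tildeW w)⁻¹ := by
  by_cases h₀ : w.toWord = []
  · rw [FreeGroup.toWord_eq_nil_iff.mp h₀, inv_one, tildeW_one, inv_one]
  by_cases h₁ : ∃ s, w.toWord = [(0, s)]
  · obtain ⟨s, hs⟩ := h₁
    rw [tildeW_of_toWord_eq_a hs, tildeW_of_toWord_eq_a (s := !s), inv_one]
    rw [FreeGroup.toWord_inv, hs]; rfl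
  push Not at h₁
  have h₀' : invRev w.toWord ≠ [] := by simpa [FreeGroup.invRev] using h₀
  have h₁' : ∀ s, invRev w.toWord ≠ [(0, s)] := fun s hs =>
    h₁ (!s) (by rw [← FreeGroup.invRev_invRev (L₁ := w.toWord), hs]; rfl)
  rw [tildeW_of_toWord (FreeGroup.toWord_inv w) h₀' h₁', tildeW_of_toWord rfl h₀ h₁,
    FreeGroup.inv_mk, endAInv_invRev, startA_invRev, startA_endAInv_comm h₁]

theorem tildeW_mem_Alt {w : W} (hw : w ∈ Alt) : tildeW w ∈ Alt := by
  by_cases h₀ : w.toWord = []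
  · rw [FreeGroup.toWord_eq_nil_iff.mp h₀, tildeW_one]; exact IsChain.nil
  by_cases h₁ : ∃ s, w.toWord = [(0, s)]
  · obtain ⟨s, hs⟩ := h₁
    rw [tildeW_of_toWord_eq_a hs]; exact IsChain.nil
  push Not at h₁
  rw [tildeW_of_toWord rfl h₀ h₁]
  exact (mem_Alt_iff.mp hw).endAInv.startA.mk_mem_Alt

theorem tildeW_mk_cons_a {s : Bool} {L : List Letter} (h : IsAltWord ((0, s) :: L)) :
    tildeW (mk ((0, s) :: L)) = tildeW (mk L) := by
  rcases L with _ | ⟨q, T⟩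
  · exact (tildeW_of_toWord_eq_a h.toWord_mk).trans tildeW_one.symm
  have hq : q.1 ≠ 0 := fun hq => (isChain_cons_cons.mp h).1 hq.symm
  have hne : ∀ t, q :: T ≠ [(0, t)] := fun t ht => hq (by rw [(cons_eq_cons.mp ht).1])
  rw [tildeW_of_toWord h.toWord_mk (cons_ne_nil _ _) (by simp),
    tildeW_of_toWord (show IsAltWord (q :: T) from h.tail).toWord_mk (cons_ne_nil _ _) hne,
    startA_endAInv_comm hne, endAInv_cons _ (cons_ne_nil _ _)]
  simp [startA, hq, endAInv_cons _ (cons_ne_nil q T)]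

theorem tildeW_mk_append_a {s : Bool} {L : List Letter} (h : IsAltWord (L ++ [(0, s)])) :
    tildeW (mk (L ++ [(0, s)])) = tildeW (mk L) := by
  have h' : IsAltWord ((0, !s) :: invRev L) := by
    simpa [FreeGroup.invRev] using h.invRev
  have hinv : mk (L ++ [(0, s)]) = (mk ((0, !s) :: invRev L))⁻¹ := by
    rw [FreeGroup.inv_mk, FreeGroup.invRev_cons, FreeGroup.invRev_invRev, invRev_singleton,
      Bool.not_not]
  rw [hinv, tildeW_inv, tildeW_mk_cons_a h', ← FreeGroup.inv_mk, tildeW_inv, inv_inv]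

def sandwich (c : List Letter) (x : Letter) (d : List Letter) : List Letter := invRev c ++ [x] ++ d

theorem sandwich_nil_left (x : Letter) (d : List Letter) : sandwich [] x d = x :: d := rfl

theorem sandwich_nil_right (c : List Letter) (x : Letter) : sandwich c x [] = invRev c ++ [x] :=
  append_nil _

theorem invRev_sandwich (c : List Letter) (x : Letter) (d : List Letter) :
    invRev (sandwich c x d) = sandwich d (x.1, !x.2) c := by
  rw [sandwich, sandwich, FreeGroup.invRev_append, FreeGroup.invRev_append, invRev_singleton,
    FreeGroup.invRev_invRev, append_assoc]

theorem mk_sandwich_inv (c : List Letter) (x : Letter) (d : List Letter) :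
    (mk (sandwich c x d))⁻¹ = mk (sandwich d (x.1, !x.2) c) := by
  rw [FreeGroup.inv_mk, invRev_sandwich]

theorem isAltWord_sandwich_iff {c d : List Letter} {i : Fin 2} {s t : Bool} :
    IsAltWord (sandwich c (i, s) d) ↔ IsAltWord (sandwich c (i, t) d) := by
  simp [isAltWord_iff_map_fst, sandwich]

theorem IsAltWord.sandwich_right {c d : List Letter} {x : Letter} (h : IsAltWord (sandwich c x d)) :
    IsAltWord (x :: d) :=
  IsChain.infix h ⟨FreeGroup.invRev c, [], by simp [sandwich]⟩

theorem IsAltWord.sandwich_left {c d : List Letter} {x : Letter} (h : IsAltWord (sandwich c x d)) :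
    IsAltWord (FreeGroup.invRev c ++ [x]) :=
  IsChain.infix h ⟨[], d, by simp [sandwich]⟩

theorem startA_sandwich {c d : List Letter} {x : Letter} (hc : c = [] → x = (0, true)) :
    startA (sandwich c x d) = sandwich (endAInv c) x d := by
  by_cases h : c = []
  · subst h; simp [sandwich, hc rfl, startA, endAInv, FreeGroup.invRev]
  · have : invRev c ≠ [] := by simpa [FreeGroup.invRev] using h
    rw [sandwich, append_assoc, startA_append _ this, startA_invRev, sandwich, append_assoc]

theorem endAInv_sandwich {c d : List Letter} {x : Letter} (hd : d = [] → x = (0, false)) :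
    endAInv (sandwich c x d) = sandwich c x (endAInv d) := by
  rw [endAInv, invRev_sandwich, startA_sandwich fun h => by simp [hd h], invRev_sandwich, endAInv,
    Bool.not_not]

/-- A spoke `c⁻¹ x d` of a letter triangle. A side may only be empty as in a tilde image: then `x`
is the first letter `a`, resp. the last letter `a⁻¹`, of the spoke. -/
def IsSpoke (c : List Letter) (x : Letter) (d : List Letter) : Prop :=
  IsAltWord (sandwich c x d) ∧ (c = [] → x = (0, true)) ∧ (d = [] → x = (0, false))

theorem IsSpoke.startA_endAInv {c d : List Letter} {x : Letter} (h : IsSpoke c x d) :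
    startA (endAInv (sandwich c x d)) = sandwich (endAInv c) x (endAInv d) := by
  rw [endAInv_sandwich h.2.2, startA_sandwich h.2.1]

theorem IsSpoke.tildeW {c d : List Letter} {x : Letter} (h : IsSpoke c x d) :
    tildeW (mk (sandwich c x d)) = mk (sandwich (endAInv c) x (endAInv d)) := by
  refine h.startA_endAInv ▸ tildeW_of_toWord h.1.toWord_mk (by simp [sandwich]) fun s hs => ?_
  obtain ⟨hc, hd⟩ : c = [] ∧ d = [] := by
    have := congrArg length hs
    simp only [sandwich, length_append, FreeGroup.invRev_length, length_singleton] at this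
    exact ⟨length_eq_zero_iff.mp (by omega), length_eq_zero_iff.mp (by omega)⟩
  simpa using (h.2.1 hc).symm.trans (h.2.2 hd)

theorem IsSpoke.endAInv {c d : List Letter} {x : Letter} (h : IsSpoke c x d) :
    IsSpoke (endAInv c) x (endAInv d) :=
  ⟨h.startA_endAInv ▸ h.1.endAInv.startA, fun hc => h.2.1 (endAInv_eq_nil_iff.mp hc),
    fun hd => h.2.2 (endAInv_eq_nil_iff.mp hd)⟩

theorem IsSpoke.reverse {c d : List Letter} {x : Letter} (h : IsSpoke c x d) :
    IsSpoke d (x.1, !x.2) c :=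
  ⟨invRev_sandwich c x d ▸ h.1.invRev, fun hd => by simp [h.2.2 hd],
    fun hc => by simp [h.2.1 hc]⟩

def flipAt (j : Fin 2) (p : Letter) : Letter := if p.1 = j then (p.1, !p.2) else p

theorem phiaF_mk (L : List Letter) : phiaF (mk L) = mk (L.map (flipAt 0)) := by
  induction L with
  | nil => rfl
  | cons p L ih =>
    have key : ∀ p : Letter, phiaF (mk [p]) = mk [flipAt 0 p] := by decide
    rw [← singleton_append, ← FreeGroup.mul_mk, _root_.map_mul, ih, key, FreeGroup.mul_mk]; rfl

theorem phibF_mk (L : List Letter) : phibF (mk L) = mk (L.map (flipAt 1)) := by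
  induction L with
  | nil => rfl
  | cons p L ih =>
    have key : ∀ p : Letter, phibF (mk [p]) = mk [flipAt 1 p] := by decide
    rw [← singleton_append, ← FreeGroup.mul_mk, _root_.map_mul, ih, key, FreeGroup.mul_mk]; rfl

theorem IsAltWord.map_flipAt {L : List Letter} (h : IsAltWord L) (j : Fin 2) :
    IsAltWord (L.map (flipAt j)) := by
  have : ∀ p, (flipAt j p).1 = p.1 := fun p => by unfold flipAt; split <;> rfl
  rw [IsAltWord, isChain_map]
  exact h.imp fun p q hpq => by rwa [this, this]

theorem map_flipAt_invRev (j : Fin 2) (L : List Letter) :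
    (invRev L).map (flipAt j) = invRev (L.map (flipAt j)) := by
  simp only [FreeGroup.invRev, map_reverse, map_map]
  congr 2
  funext p
  simp only [Function.comp, flipAt]
  split <;> rfl

section TripleEquiv

variable {x₁ x₂ x₃ : W}

theorem tripleEquiv_rotate (x₁ x₂ x₃ : W) : TripleEquiv (x₁, x₂, x₃) (x₂, x₃, x₁) :=
  .rel _ _ (Or.inl rfl)

theorem tripleEquiv_reverse (x₁ x₂ x₃ : W) : TripleEquiv (x₁, x₂, x₃) (x₃⁻¹, x₂⁻¹, x₁⁻¹) :=
  .rel _ _ (Or.inr (Or.inl rfl))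

theorem tripleEquiv_flipAt (j : Fin 2) (L₁ L₂ L₃ : List Letter) :
    TripleEquiv (mk L₁, mk L₂, mk L₃)
      (mk (L₁.map (flipAt j)), mk (L₂.map (flipAt j)), mk (L₃.map (flipAt j))) := by
  fin_cases j
  · exact .rel _ _ (Or.inr (Or.inr (Or.inl (by simp [phiaF_mk]))))
  · exact .rel _ _ (Or.inr (Or.inr (Or.inr (by simp [phibF_mk]))))

theorem _root_.LetterThin.of_tripleEquiv {y₁ y₂ y₃ : W} (h₁ : x₁ ∈ Alt) (h₂ : x₂ ∈ Alt)
    (h₃ : x₃ ∈ Alt) (he : TripleEquiv (x₁, x₂, x₃) (y₁, y₂, y₃)) (h : LetterThin y₁ y₂ y₃) :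
    LetterThin x₁ x₂ x₃ :=
  let ⟨_, _, _, z₁, z₂, z₃, hz, hf⟩ := h
  ⟨h₁, h₂, h₃, z₁, z₂, z₃, he.trans _ _ _ hz, hf⟩

theorem _root_.LetterThin.of_rotate (h : LetterThin x₂ x₃ x₁) : LetterThin x₁ x₂ x₃ :=
  h.of_tripleEquiv h.2.2.1 h.1 h.2.1 (tripleEquiv_rotate _ _ _)

theorem _root_.LetterThin.of_reverse (h : LetterThin x₃⁻¹ x₂⁻¹ x₁⁻¹) : LetterThin x₁ x₂ x₃ :=
  h.of_tripleEquiv (by simpa using inv_mem_Alt h.2.2.1) (by simpa using inv_mem_Alt h.2.1)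
    (by simpa using inv_mem_Alt h.1) (tripleEquiv_reverse _ _ _)

theorem _root_.Degenerate.of_rotate (h : Degenerate x₂ x₃ x₁) : Degenerate x₁ x₂ x₃ :=
  let ⟨u, hu⟩ := h
  ⟨u, (tripleEquiv_rotate _ _ _).trans _ _ _ hu⟩

theorem degenerate_inv_one (u : W) : Degenerate u u⁻¹ 1 := ⟨u, .refl _⟩

end TripleEquiv

theorem letterThin_T1 {i j : Fin 2} (hij : i ≠ j) {p q r : List Letter}
    (h₁ : IsAltWord (invRev p ++ [(i, true), (j, true)] ++ q))
    (h₂ : IsAltWord (invRev q ++ [(j, false), (i, true)] ++ r))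
    (h₃ : IsAltWord (invRev r ++ [(i, false)] ++ p)) :
    LetterThin (mk (invRev p ++ [(i, true), (j, true)] ++ q))
      (mk (invRev q ++ [(j, false), (i, true)] ++ r)) (mk (invRev r ++ [(i, false)] ++ p)) := by
  have hp : IsAltWord p := (isAltWord_append.mp h₃).2.1
  have hq : IsAltWord q := (isAltWord_append.mp h₁).2.1
  have hr : IsAltWord r := (isAltWord_append.mp h₂).2.1
  refine ⟨h₁.mk_mem_Alt, h₂.mk_mem_Alt, h₃.mk_mem_Alt, _, _, _, .refl _, ?_⟩
  have e₁ : (mk (invRev p ++ [(i, true), (j, true)] ++ q)).toWord =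
      ((mk p)⁻¹).toWord ++ [(i, true), (j, true)] ++ (mk q).toWord := by
    rw [h₁.toWord_mk, hp.toWord_mk_inv, hq.toWord_mk]
  have e₂ : (mk (invRev q ++ [(j, false), (i, true)] ++ r)).toWord =
      ((mk q)⁻¹).toWord ++ [(j, false), (i, true)] ++ (mk r).toWord := by
    rw [h₂.toWord_mk, hq.toWord_mk_inv, hr.toWord_mk]
  have e₃ : (mk (invRev r ++ [(i, false)] ++ p)).toWord =
      ((mk r)⁻¹).toWord ++ [(i, false)] ++ (mk p).toWord := by
    rw [h₃.toWord_mk, hr.toWord_mk_inv, hp.toWord_mk]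
  fin_cases i <;> fin_cases j
  · exact absurd rfl hij
  · exact .inl ⟨mk p, mk q, mk r, hp.mk_mem_Alt, hq.mk_mem_Alt, hr.mk_mem_Alt, e₁, e₂, e₃⟩
  · exact .inr (.inl ⟨mk p, mk q, mk r, hp.mk_mem_Alt, hq.mk_mem_Alt, hr.mk_mem_Alt, e₁, e₂, e₃⟩)
  · exact absurd rfl hij

theorem letterThin_of_T1_shape {i : Fin 2} {y : Letter} (hy : y.1 ≠ i) {p q r : List Letter}
    (h₁ : IsAltWord (invRev p ++ [(i, true), y] ++ q))
    (h₂ : IsAltWord (invRev q ++ [(y.1, !y.2), (i, true)] ++ r))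
    (h₃ : IsAltWord (invRev r ++ [(i, false)] ++ p)) :
    LetterThin (mk (invRev p ++ [(i, true), y] ++ q))
      (mk (invRev q ++ [(y.1, !y.2), (i, true)] ++ r)) (mk (invRev r ++ [(i, false)] ++ p)) := by
  obtain ⟨j, _ | _⟩ := y
  · have hf : ∀ s, flipAt j (i, s) = (i, s) := fun s => if_neg (Ne.symm hy)
    have hf' : ∀ s, flipAt j (j, s) = (j, !s) := fun s => if_pos rfl
    refine .of_tripleEquiv h₁.mk_mem_Alt h₂.mk_mem_Alt h₃.mk_mem_Alt
      (tripleEquiv_flipAt j _ _ _) ?_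
    have h₁' := h₁.map_flipAt j
    have h₂' := h₂.map_flipAt j
    have h₃' := h₃.map_flipAt j
    simp only [map_append, map_flipAt_invRev, map_cons, map_nil, hf, hf'] at h₁' h₂' h₃' ⊢
    exact letterThin_T1 (Ne.symm hy) h₁' h₂' h₃'
  · exact letterThin_T1 (Ne.symm hy) h₁ h₂ h₃

def IsLetterTriangle (i : Fin 2) (c₁ c₂ c₃ : List Letter) (s₁ s₂ s₃ : Bool) : Prop :=
  IsSpoke c₁ (i, s₁) c₂ ∧ IsSpoke c₂ (i, s₂) c₃ ∧ IsSpoke c₃ (i, s₃) c₁ ∧ ¬(s₁ = s₂ ∧ s₂ = s₃)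

section LetterTriangle

variable {i : Fin 2} {c₁ c₂ c₃ : List Letter} {s₁ s₂ s₃ : Bool}

theorem IsLetterTriangle.rotate (h : IsLetterTriangle i c₁ c₂ c₃ s₁ s₂ s₃) :
    IsLetterTriangle i c₂ c₃ c₁ s₂ s₃ s₁ :=
  ⟨h.2.1, h.2.2.1, h.1, fun ⟨h₂₃, h₃₁⟩ => h.2.2.2 ⟨(h₂₃.trans h₃₁).symm, h₂₃⟩⟩

theorem IsLetterTriangle.reverse (h : IsLetterTriangle i c₁ c₂ c₃ s₁ s₂ s₃) :
    IsLetterTriangle i c₁ c₃ c₂ (!s₃) (!s₂) (!s₁) :=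
  ⟨h.2.2.1.reverse, h.2.1.reverse, h.1.reverse,
    fun ⟨h₃₂, h₂₁⟩ => h.2.2.2 ⟨(Bool.not_inj h₂₁).symm, (Bool.not_inj h₃₂).symm⟩⟩

theorem IsLetterTriangle.letterThin_of_true_true_false
    (h : IsLetterTriangle i c₁ c₂ c₃ true true false) :
    LetterThin (mk (sandwich c₁ (i, true) c₂)) (mk (sandwich c₂ (i, true) c₃))
      (mk (sandwich c₃ (i, false) c₁)) := by
  obtain ⟨⟨h₁, -, hc₂⟩, ⟨h₂, -⟩, ⟨h₃, -⟩, -⟩ := h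
  obtain ⟨y, q, rfl⟩ : ∃ y q, c₂ = y :: q :=
    ne_nil_iff_exists_cons.mp fun hc => absurd (hc₂ hc) (by simp)
  have hy : y.1 ≠ i := fun hy =>
    (isAltWord_append (M := invRev c₁ ++ [(i, true)]) (N := y :: q)).mp h₁ |>.2.2 (i, true)
      (by simp) y (by simp) hy.symm
  have e₁ : sandwich c₁ (i, true) (y :: q) = invRev c₁ ++ [(i, true), y] ++ q := by
    simp [sandwich]
  have e₂ : sandwich (y :: q) (i, true) c₃ = invRev q ++ [(y.1, !y.2), (i, true)] ++ c₃ := by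
    rw [sandwich, FreeGroup.invRev_cons, invRev_singleton]; simp
  rw [e₁] at h₁ ⊢
  rw [e₂] at h₂ ⊢
  exact letterThin_of_T1_shape hy h₁ h₂ h₃

theorem letterThin_of_reverse_triangle
    (h : LetterThin (mk (sandwich c₁ (i, !s₃) c₃)) (mk (sandwich c₃ (i, !s₂) c₂))
      (mk (sandwich c₂ (i, !s₁) c₁))) :
    LetterThin (mk (sandwich c₁ (i, s₁) c₂)) (mk (sandwich c₂ (i, s₂) c₃))
      (mk (sandwich c₃ (i, s₃) c₁)) :=
  .of_reverse (by simpa only [mk_sandwich_inv] using h)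

theorem IsLetterTriangle.letterThin (h : IsLetterTriangle i c₁ c₂ c₃ s₁ s₂ s₃) :
    LetterThin (mk (sandwich c₁ (i, s₁) c₂)) (mk (sandwich c₂ (i, s₂) c₃))
      (mk (sandwich c₃ (i, s₃) c₁)) := by
  cases s₁ <;> cases s₂ <;> cases s₃
  · exact absurd ⟨rfl, rfl⟩ h.2.2.2
  · exact letterThin_of_reverse_triangle h.reverse.rotate.letterThin_of_true_true_false.of_rotate
  · exact letterThin_of_reverse_triangle
      h.reverse.rotate.rotate.letterThin_of_true_true_false.of_rotate.of_rotate
  · exact h.rotate.letterThin_of_true_true_false.of_rotate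
  · exact letterThin_of_reverse_triangle h.reverse.letterThin_of_true_true_false
  · exact h.rotate.rotate.letterThin_of_true_true_false.of_rotate.of_rotate
  · exact h.letterThin_of_true_true_false
  · exact absurd ⟨rfl, rfl⟩ h.2.2.2

theorem IsLetterTriangle.letterThin_tildeW (h : IsLetterTriangle i c₁ c₂ c₃ s₁ s₂ s₃) :
    LetterThin (tildeW (mk (sandwich c₁ (i, s₁) c₂))) (tildeW (mk (sandwich c₂ (i, s₂) c₃)))
      (tildeW (mk (sandwich c₃ (i, s₃) c₁))) := by
  rw [h.1.tildeW, h.2.1.tildeW, h.2.2.1.tildeW]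
  exact IsLetterTriangle.letterThin ⟨h.1.endAInv, h.2.1.endAInv, h.2.2.1.endAInv, h.2.2.2⟩

end LetterTriangle

def IsThinOrDegenerate (x₁ x₂ x₃ : W) : Prop := LetterThin x₁ x₂ x₃ ∨ Degenerate x₁ x₂ x₃

theorem IsThinOrDegenerate.of_rotate {x₁ x₂ x₃ : W} (h : IsThinOrDegenerate x₂ x₃ x₁) :
    IsThinOrDegenerate x₁ x₂ x₃ :=
  h.imp LetterThin.of_rotate Degenerate.of_rotate

/-- An empty side next to a `b`-letter may be filled with a virtual `a⁻¹`: this changes no tilde. -/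
def padA (c : List Letter) : List Letter := if c = [] then [(0, false)] else c

theorem padA_ne_nil (c : List Letter) : padA c ≠ [] := by
  unfold padA; split <;> simp_all

theorem tildeW_sandwich_padA_left {c d : List Letter} {s : Bool}
    (h : IsAltWord (sandwich c (1, s) d)) :
    IsAltWord (sandwich (padA c) (1, s) d) ∧
      tildeW (mk (sandwich (padA c) (1, s) d)) = tildeW (mk (sandwich c (1, s) d)) := by
  by_cases hc : c = []
  · subst hc
    have h' : IsAltWord (sandwich [(0, false)] (1, s) d) := h.cons_a (by simp [sandwich]) true
    exact ⟨h', tildeW_mk_cons_a h'⟩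
  · simp [padA, hc, h]

theorem tildeW_sandwich_padA_right {c d : List Letter} {s : Bool}
    (h : IsAltWord (sandwich c (1, s) d)) :
    IsAltWord (sandwich c (1, s) (padA d)) ∧
      tildeW (mk (sandwich c (1, s) (padA d))) = tildeW (mk (sandwich c (1, s) d)) := by
  by_cases hd : d = []
  · subst hd
    have e : sandwich c (1, s) (padA []) = sandwich c (1, s) [] ++ [(0, false)] := by
      simp [sandwich, padA]
    have h' := h.append_a (by simp [sandwich]) false
    rw [e]
    exact ⟨h', tildeW_mk_append_a h'⟩
  · simp [padA, hd, h]

theorem tildeW_sandwich_padA {c d : List Letter} {s : Bool} (h : IsAltWord (sandwich c (1, s) d)) :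
    IsSpoke (padA c) (1, s) (padA d) ∧
      tildeW (mk (sandwich (padA c) (1, s) (padA d))) = tildeW (mk (sandwich c (1, s) d)) :=
  have hl := tildeW_sandwich_padA_left h
  have hr := tildeW_sandwich_padA_right hl.1
  ⟨⟨hr.1, fun hc => absurd hc (padA_ne_nil c), fun hd => absurd hd (padA_ne_nil d)⟩,
    hr.2.trans hl.2⟩

theorem letterThin_tildeW_of_b {c₁ c₂ c₃ : List Letter} {s₁ s₂ s₃ : Bool}
    (hs : ¬(s₁ = s₂ ∧ s₂ = s₃)) (h₁ : IsAltWord (sandwich c₁ (1, s₁) c₂))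
    (h₂ : IsAltWord (sandwich c₂ (1, s₂) c₃)) (h₃ : IsAltWord (sandwich c₃ (1, s₃) c₁)) :
    LetterThin (tildeW (mk (sandwich c₁ (1, s₁) c₂)))
      (tildeW (mk (sandwich c₂ (1, s₂) c₃))) (tildeW (mk (sandwich c₃ (1, s₃) c₁))) := by
  obtain ⟨k₁, e₁⟩ := tildeW_sandwich_padA h₁
  obtain ⟨k₂, e₂⟩ := tildeW_sandwich_padA h₂
  obtain ⟨k₃, e₃⟩ := tildeW_sandwich_padA h₃
  rw [← e₁, ← e₂, ← e₃]
  exact IsLetterTriangle.letterThin_tildeW ⟨k₁, k₂, k₃, hs⟩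

/-- The sign of an `a`-letter at the boundary of its word does not affect its tilde. -/
def boundarySign (c d : List Letter) (s : Bool) : Bool :=
  if c = [] then true else if d = [] then false else s

theorem tildeW_sandwich_boundarySign {c d : List Letter} {s : Bool}
    (h : IsAltWord (sandwich c (0, s) d)) (hcd : ¬(c = [] ∧ d = [])) :
    IsSpoke c (0, boundarySign c d s) d ∧
      tildeW (mk (sandwich c (0, boundarySign c d s) d)) = tildeW (mk (sandwich c (0, s) d)) := by
  have h' := (isAltWord_sandwich_iff (t := boundarySign c d s)).mp h
  refine ⟨⟨h', fun hc => by simp [boundarySign, hc], fun hd => by simp_all [boundarySign]⟩, ?_⟩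
  by_cases hc : c = []
  · subst hc
    exact (tildeW_mk_cons_a h').trans (tildeW_mk_cons_a h).symm
  by_cases hd : d = []
  · subst hd
    simp only [sandwich, append_nil] at h h' ⊢
    exact (tildeW_mk_append_a h').trans (tildeW_mk_append_a h).symm
  · simp [boundarySign, hc, hd]

theorem degenerate_tildeW_of_nil_nil {c : List Letter} {s₁ s₂ s₃ : Bool}
    (h₂ : IsAltWord (sandwich [] (0, s₂) c)) (h₃ : IsAltWord (sandwich c (0, s₃) [])) :
    Degenerate (tildeW (mk (sandwich [] (0, s₁) []))) (tildeW (mk (sandwich [] (0, s₂) c)))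
      (tildeW (mk (sandwich c (0, s₃) []))) := by
  simp only [sandwich, FreeGroup.invRev_empty, nil_append, append_nil, singleton_append] at h₂ h₃ ⊢
  rw [tildeW_of_toWord_eq_a (FreeGroup.toWord_mk.trans (reduce_singleton _)),
    tildeW_mk_cons_a h₂, tildeW_mk_append_a h₃, ← FreeGroup.inv_mk, tildeW_inv]
  exact .of_rotate (degenerate_inv_one _)

theorem isThinOrDegenerate_tildeW_of_a {c₁ c₂ c₃ : List Letter} {s₁ s₂ s₃ : Bool}
    (hs : ¬(s₁ = s₂ ∧ s₂ = s₃)) (h₁ : IsAltWord (sandwich c₁ (0, s₁) c₂))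
    (h₂ : IsAltWord (sandwich c₂ (0, s₂) c₃)) (h₃ : IsAltWord (sandwich c₃ (0, s₃) c₁)) :
    IsThinOrDegenerate (tildeW (mk (sandwich c₁ (0, s₁) c₂)))
      (tildeW (mk (sandwich c₂ (0, s₂) c₃))) (tildeW (mk (sandwich c₃ (0, s₃) c₁))) := by
  by_cases h₁₂ : c₁ = [] ∧ c₂ = []
  · obtain ⟨rfl, rfl⟩ := h₁₂
    exact .inr (degenerate_tildeW_of_nil_nil h₂ h₃)
  by_cases h₂₃ : c₂ = [] ∧ c₃ = []
  · obtain ⟨rfl, rfl⟩ := h₂₃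
    exact .of_rotate (.inr (degenerate_tildeW_of_nil_nil h₃ h₁))
  by_cases h₃₁ : c₃ = [] ∧ c₁ = []
  · obtain ⟨rfl, rfl⟩ := h₃₁
    exact .of_rotate (.of_rotate (.inr (degenerate_tildeW_of_nil_nil h₁ h₂)))
  obtain ⟨k₁, e₁⟩ := tildeW_sandwich_boundarySign h₁ h₁₂
  obtain ⟨k₂, e₂⟩ := tildeW_sandwich_boundarySign h₂ h₂₃
  obtain ⟨k₃, e₃⟩ := tildeW_sandwich_boundarySign h₃ h₃₁
  rw [← e₁, ← e₂, ← e₃]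
  refine .inl (IsLetterTriangle.letterThin_tildeW ⟨k₁, k₂, k₃, ?_⟩)
  unfold boundarySign
  split_ifs <;> simp_all

theorem isThinOrDegenerate_tildeW_sandwich (i : Fin 2) {c₁ c₂ c₃ : List Letter} {s₁ s₂ s₃ : Bool}
    (hs : ¬(s₁ = s₂ ∧ s₂ = s₃)) (h₁ : IsAltWord (sandwich c₁ (i, s₁) c₂))
    (h₂ : IsAltWord (sandwich c₂ (i, s₂) c₃)) (h₃ : IsAltWord (sandwich c₃ (i, s₃) c₁)) :
    IsThinOrDegenerate (tildeW (mk (sandwich c₁ (i, s₁) c₂)))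
      (tildeW (mk (sandwich c₂ (i, s₂) c₃))) (tildeW (mk (sandwich c₃ (i, s₃) c₁))) := by
  fin_cases i
  · exact isThinOrDegenerate_tildeW_of_a hs h₁ h₂ h₃
  · exact .inl (letterThin_tildeW_of_b hs h₁ h₂ h₃)

/-- A virtual `a^(-s)` in front of `P` and `a⁻¹` behind `Q⁻¹` make this a letter triangle with an
empty first side. -/
theorem isThinOrDegenerate_tildeW_of_a_junction {P Q : List Letter} {s : Bool}
    (h : IsAltWord (sandwich P (0, s) Q)) :
    IsThinOrDegenerate (tildeW (mk P)) (tildeW (mk (sandwich P (0, s) Q)))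
      (tildeW (mk (invRev Q))) := by
  have h' : IsAltWord (sandwich Q (0, !s) P) := by simpa [invRev_sandwich] using h.invRev
  have hP : IsAltWord ((0, !s) :: P) := h'.sandwich_right
  have hQ : IsAltWord (invRev Q ++ [(0, false)]) := by
    rw [← sandwich_nil_right, isAltWord_sandwich_iff (t := !s), sandwich_nil_right]
    exact h'.sandwich_left
  have := isThinOrDegenerate_tildeW_of_a (c₁ := []) (s₁ := !s) (s₃ := false)
    (by cases s <;> simp) (by rwa [sandwich_nil_left]) h (by rwa [sandwich_nil_right])
  rwa [sandwich_nil_left, sandwich_nil_right, tildeW_mk_cons_a hP, tildeW_mk_append_a hQ] at this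

theorem isThinOrDegenerate_tildeW_tripod {B C : List Letter} (h : IsAltWord (B ++ C)) :
    IsThinOrDegenerate (tildeW (mk (invRev B))) (tildeW (mk (B ++ C)))
      (tildeW (mk (invRev C))) := by
  rcases eq_nil_or_concat' B with rfl | ⟨B, b, rfl⟩
  · rw [← FreeGroup.inv_mk (L := C), tildeW_inv]
    show IsThinOrDegenerate (tildeW 1) _ _
    rw [tildeW_one]
    exact .inr (.of_rotate (degenerate_inv_one _))
  rcases C with _ | ⟨c, C⟩
  · rw [← FreeGroup.inv_mk, tildeW_inv, append_nil]
    show IsThinOrDegenerate _ _ (tildeW 1)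
    rw [tildeW_one]
    exact .inr (by simpa using degenerate_inv_one (tildeW (mk (B ++ [b])))⁻¹)
  have hB := (isAltWord_append.mp h).1
  have hC := (isAltWord_append.mp h).2.1
  have hbc : b.1 ≠ c.1 := (isAltWord_append.mp h).2.2 b (by simp) c (by simp)
  by_cases hc : c.1 = 0
  · obtain ⟨_, s⟩ := c
    subst hc
    have e : invRev ((0, s) :: C) = invRev C ++ [(0, !s)] := by
      rw [FreeGroup.invRev_cons, invRev_singleton]
    have := isThinOrDegenerate_tildeW_of_a_junction (P := invRev (B ++ [b])) (s := s) (Q := C)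
      (by simpa [sandwich, FreeGroup.invRev_invRev] using h)
    rw [e, tildeW_mk_append_a (e ▸ hC.invRev)]
    simpa [sandwich, FreeGroup.invRev_invRev] using this
  · obtain ⟨i, s⟩ := b
    obtain rfl : i = 0 := by simp only at hbc; omega
    have e : invRev (B ++ [(0, s)]) = (0, !s) :: invRev B := by
      rw [FreeGroup.invRev_append, invRev_singleton, singleton_append]
    have := isThinOrDegenerate_tildeW_of_a_junction (P := invRev B) (s := s) (Q := c :: C)
      (by simpa [sandwich, FreeGroup.invRev_invRev] using h)
    rw [e, tildeW_mk_cons_a (e ▸ hB.invRev)]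
    simpa [sandwich, FreeGroup.invRev_invRev] using this

theorem nil_or_nil_or_nil_of_tripod {A B C : List Letter} (h₁ : IsAltWord (A ++ invRev B))
    (h₂ : IsAltWord (B ++ C)) (h₃ : IsAltWord (invRev C ++ invRev A)) :
    A = [] ∨ B = [] ∨ C = [] := by
  rcases eq_nil_or_concat' A with rfl | ⟨A, a, rfl⟩
  · exact .inl rfl
  rcases eq_nil_or_concat' B with rfl | ⟨B, b, rfl⟩
  · exact .inr (.inl rfl)
  rcases C with _ | ⟨c, C⟩
  · exact .inr (.inr rfl)
  have hab : a.1 ≠ b.1 := (isAltWord_append.mp h₁).2.2 a (by simp) (b.1, !b.2)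
    (by simp [FreeGroup.invRev])
  have hbc : b.1 ≠ c.1 := (isAltWord_append.mp h₂).2.2 b (by simp) c (by simp)
  have hca : c.1 ≠ a.1 := (isAltWord_append.mp h₃).2.2 (c.1, !c.2) (by simp [FreeGroup.invRev])
    (a.1, !a.2) (by simp [FreeGroup.invRev])
  omega

theorem isThinOrDegenerate_tildeW_of_mul_eq_one {x₁ x₂ x₃ : W} (h₁ : x₁ ∈ Alt) (h₂ : x₂ ∈ Alt)
    (h₃ : x₃ ∈ Alt) (h : x₁ * x₂ * x₃ = 1) :
    IsThinOrDegenerate (tildeW x₁) (tildeW x₂) (tildeW x₃) := by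
  obtain ⟨A, B, C, e₁, e₂, hAC⟩ :=
    (mem_Alt_iff.mp h₁).isReduced.exists_tripod (mem_Alt_iff.mp h₂).isReduced
  have e₃ : x₃.toWord = invRev C ++ invRev A := by
    have : x₁ * x₂ = mk (A ++ C) := by
      rw [← FreeGroup.mk_toWord (x := x₁), ← FreeGroup.mk_toWord (x := x₂), e₁, e₂,
        ← FreeGroup.mul_mk, ← FreeGroup.mul_mk, ← FreeGroup.mul_mk, ← FreeGroup.inv_mk]
      group
    rw [eq_inv_of_mul_eq_one_right h, this, FreeGroup.toWord_inv, FreeGroup.toWord_mk,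
      hAC.reduce_eq, FreeGroup.invRev_append]
  rw [mem_Alt_iff, e₁] at h₁
  rw [mem_Alt_iff, e₂] at h₂
  rw [mem_Alt_iff, e₃] at h₃
  rw [← FreeGroup.mk_toWord (x := x₁), ← FreeGroup.mk_toWord (x := x₂),
    ← FreeGroup.mk_toWord (x := x₃), e₁, e₂, e₃]
  rcases nil_or_nil_or_nil_of_tripod h₁ h₂ h₃ with rfl | rfl | rfl
  · simpa using isThinOrDegenerate_tildeW_tripod h₂
  · simpa [FreeGroup.invRev_invRev] using (isThinOrDegenerate_tildeW_tripod h₃).of_rotate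
  · simpa [FreeGroup.invRev_invRev] using (isThinOrDegenerate_tildeW_tripod h₁).of_rotate.of_rotate

theorem isThinOrDegenerate_tildeW_of_letter {x₁ x₂ x₃ c₁ c₂ c₃ : W} {i : Fin 2}
    {s₁ s₂ s₃ : Bool} (hs : ¬(s₁ = s₂ ∧ s₂ = s₃)) (h₁ : x₁ ∈ Alt) (h₂ : x₂ ∈ Alt) (h₃ : x₃ ∈ Alt)
    (e₁ : x₁.toWord = (c₁⁻¹).toWord ++ [(i, s₁)] ++ c₂.toWord)
    (e₂ : x₂.toWord = (c₂⁻¹).toWord ++ [(i, s₂)] ++ c₃.toWord)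
    (e₃ : x₃.toWord = (c₃⁻¹).toWord ++ [(i, s₃)] ++ c₁.toWord) :
    IsThinOrDegenerate (tildeW x₁) (tildeW x₂) (tildeW x₃) := by
  simp only [FreeGroup.toWord_inv] at e₁ e₂ e₃
  rw [mem_Alt_iff, e₁] at h₁
  rw [mem_Alt_iff, e₂] at h₂
  rw [mem_Alt_iff, e₃] at h₃
  rw [← FreeGroup.mk_toWord (x := x₁), ← FreeGroup.mk_toWord (x := x₂),
    ← FreeGroup.mk_toWord (x := x₃), e₁, e₂, e₃]
  exact isThinOrDegenerate_tildeW_sandwich i hs h₁ h₂ h₃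

end LetterQM

open LetterQM

/-- **Proposition.** If `Φ : G → 𝒜` is a letter-quasimorphism, then the associated map
`Φ̃ = tildeW ∘ Φ` is a well-behaved letter-quasimorphism. -/
theorem tilde_wellBehaved {G : Type*} [Group G] (Φ : G → W) (hΦ : IsLetterQM Φ) :
    IsWellBehavedLQM (fun g => tildeW (Φ g)) := by
  obtain ⟨hAlt, hinv, htriple⟩ := hΦ
  refine ⟨fun g => tildeW_mem_Alt (hAlt g), fun g => by simp only [hinv, tildeW_inv],
    fun g h => ?_⟩
  show IsThinOrDegenerate (tildeW (Φ g)) (tildeW (Φ h)) (tildeW (Φ (g * h)))⁻¹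
  rw [← tildeW_inv]
  have hAlt' := inv_mem_Alt (hAlt (g * h))
  rcases htriple g h with hmul | ⟨i, s₁, s₂, s₃, c₁, c₂, c₃, -, -, -, hs, e₁, e₂, e₃⟩
  · exact isThinOrDegenerate_tildeW_of_mul_eq_one (hAlt g) (hAlt h) hAlt' hmul
  · exact isThinOrDegenerate_tildeW_of_letter hs (hAlt g) (hAlt h) hAlt' e₁ e₂ e₃
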